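/- arXiv:1906.10025 — 2 statements merged into one kernel-verified Lean document; each statement's English description precedes it below -/
import Mathlib

section
/- Relative policy performance identity (finite-horizon deterministic version): for trajectories of a finite MDP, for any two policies π and π_old, J(π) − J(π_old) = E_{τ∼π} Σ_{t≥0} γᵗ A^{π_old}(s_t, a_t), where A^{π_old}(s,a) = E_{s'}[r(s') + γ V^{π_old}(s')] − V^{π_old}(s) and J(π) = E_{τ∼π} Σ_t γᵗ r(s_{t+1}) with initial state s₀. -/
open Finset

/-- Relative policy performance identity:
J(π) − J(π_old) = E_{τ∼π} Σ_t γᵗ A^{π_old}(s_t, a_t). -/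
theorem relative_policy_performance
    {S A : Type*} [Fintype S] [Fintype A] [DecidableEq S]
    (p : S → A → S → ℝ) (hp_nonneg : ∀ s a s', 0 ≤ p s a s')
    (hp_sum : ∀ s a, ∑ s', p s a s' = 1)
    (r : S → ℝ) (γ : ℝ) (hγ0 : 0 ≤ γ) (hγ1 : γ < 1) (s₀ : S)
    (π πold : S → A → ℝ)
    (hπ_nonneg : ∀ s a, 0 ≤ π s a) (hπ_sum : ∀ s, ∑ a, π s a = 1)
    (hπold_nonneg : ∀ s a, 0 ≤ πold s a) (hπold_sum : ∀ s, ∑ a, πold s a = 1)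
    -- value function of πold: fixed point of the Bellman expectation equation
    (V : S → ℝ)
    (hV : ∀ s, V s = ∑ a, πold s a * ∑ s', p s a s' * (r s' + γ * V s'))
    -- advantage of πold
    (Adv : S → A → ℝ)
    (hAdv : ∀ s a, Adv s a = (∑ s', p s a s' * (r s' + γ * V s')) - V s)
    -- state distribution at time t induced by a policy, starting from s₀
    (d : (S → A → ℝ) → ℕ → S → ℝ)
    (hd0 : ∀ pol s, d pol 0 s = if s = s₀ then 1 else 0)
    (hdrec : ∀ pol t s', d pol (t + 1) s' = ∑ s, ∑ a, d pol t s * pol s a * p s a s')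
    -- discounted expected reward of a policy
    (J : (S → A → ℝ) → ℝ)
    (hJ : ∀ pol, J pol =
      ∑' t : ℕ, γ ^ t * ∑ s, d pol t s * ∑ a, pol s a * ∑ s', p s a s' * r s') :
    J π - J πold = ∑' t : ℕ, γ ^ t * ∑ s, d π t s * ∑ a, π s a * Adv s a := by
  classical
  -- abbreviations
  set W : (S → A → ℝ) → ℕ → ℝ := fun pol t => ∑ s, d pol t s * V s with hWdef
  set Rew : (S → A → ℝ) → ℕ → ℝ :=
    fun pol t => ∑ s, d pol t s * ∑ a, pol s a * ∑ s', p s a s' * r s' with hRewdef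
  -- swap a triple sum
  have swap3 : ∀ (F : S → A → S → ℝ),
      ∑ s' : S, ∑ s : S, ∑ a : A, F s a s' = ∑ s, ∑ a, ∑ s', F s a s' := by
    intro F
    rw [Finset.sum_comm]
    exact Finset.sum_congr rfl fun s _ => Finset.sum_comm
  -- splitting the one-step backup
  have hsplit : ∀ (pol : S → A → ℝ) (s : S),
      ∑ a, pol s a * ∑ s', p s a s' * (r s' + γ * V s')
        = (∑ a, pol s a * ∑ s', p s a s' * r s')
          + γ * ∑ a, pol s a * ∑ s', p s a s' * V s' := by
    intro pol s
    rw [Finset.mul_sum, ← Finset.sum_add_distrib]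
    refine Finset.sum_congr rfl fun a _ => ?_
    simp only [Finset.mul_sum, mul_add, ← Finset.sum_add_distrib]
    refine Finset.sum_congr rfl fun s' _ => ?_
    ring
  -- basic properties of d
  have hd_prop : ∀ (pol : S → A → ℝ), (∀ s a, 0 ≤ pol s a) → (∀ s, ∑ a, pol s a = 1) →
      ∀ t, (∀ s, 0 ≤ d pol t s) ∧ (∑ s, d pol t s = 1) := by
    intro pol hnn hsum t
    induction t with
    | zero =>
      refine ⟨fun s => ?_, ?_⟩
      · rw [hd0]; split <;> norm_num
      · simp [hd0]
    | succ t ih =>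
      obtain ⟨ihn, ihs⟩ := ih
      refine ⟨fun s' => ?_, ?_⟩
      · rw [hdrec]
        refine Finset.sum_nonneg fun s _ => Finset.sum_nonneg fun a _ => ?_
        exact mul_nonneg (mul_nonneg (ihn s) (hnn s a)) (hp_nonneg s a s')
      · calc ∑ s', d pol (t+1) s'
            = ∑ s', ∑ s, ∑ a, d pol t s * pol s a * p s a s' :=
              Finset.sum_congr rfl fun s' _ => hdrec pol t s'
          _ = ∑ s, ∑ a, ∑ s', d pol t s * pol s a * p s a s' := swap3 _
          _ = ∑ s, ∑ a, d pol t s * pol s a := by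
              refine Finset.sum_congr rfl fun s _ => Finset.sum_congr rfl fun a _ => ?_
              rw [← Finset.mul_sum, hp_sum, mul_one]
          _ = ∑ s, d pol t s := by
              refine Finset.sum_congr rfl fun s _ => ?_
              rw [← Finset.mul_sum, hsum, mul_one]
          _ = 1 := ihs
  -- boundedness of averages against d
  have hbound : ∀ (pol : S → A → ℝ), (∀ s a, 0 ≤ pol s a) → (∀ s, ∑ a, pol s a = 1) →
      ∀ (f : S → ℝ) (t : ℕ), |∑ s, d pol t s * f s| ≤ ∑ s, |f s| := by
    intro pol hnn hsum f t
    obtain ⟨hdn, hds⟩ := hd_prop pol hnn hsum t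
    calc |∑ s, d pol t s * f s| ≤ ∑ s, |d pol t s * f s| := Finset.abs_sum_le_sum_abs _ _
      _ ≤ ∑ s, |f s| := by
        refine Finset.sum_le_sum fun s _ => ?_
        rw [abs_mul, abs_of_nonneg (hdn s)]
        have hle1 : d pol t s ≤ 1 := by
          rw [← hds]
          exact Finset.single_le_sum (fun i _ => hdn i) (Finset.mem_univ s)
        exact mul_le_of_le_one_left (abs_nonneg _) hle1
  -- summability helper
  have hsummable : ∀ (g : ℕ → ℝ) (C : ℝ), (∀ t, |g t| ≤ C) →
      Summable (fun t => γ ^ t * g t) := by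
    intro g C hC
    refine Summable.of_norm_bounded
      ((summable_geometric_of_lt_one hγ0 hγ1).mul_left C) fun t => ?_
    rw [Real.norm_eq_abs, abs_mul, abs_pow, abs_of_nonneg hγ0, mul_comm]
    exact mul_le_mul_of_nonneg_right (hC t) (pow_nonneg hγ0 t)
  have hWsummable : ∀ (pol : S → A → ℝ), (∀ s a, 0 ≤ pol s a) → (∀ s, ∑ a, pol s a = 1) →
      Summable (fun t => γ ^ t * W pol t) := by
    intro pol hnn hsum
    exact hsummable _ (∑ s, |V s|) (fun t => hbound pol hnn hsum V t)
  have hRewsummable : ∀ (pol : S → A → ℝ), (∀ s a, 0 ≤ pol s a) → (∀ s, ∑ a, pol s a = 1) →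
      Summable (fun t => γ ^ t * Rew pol t) := by
    intro pol hnn hsum
    exact hsummable _ (∑ s, |∑ a, pol s a * ∑ s', p s a s' * r s'|)
      (fun t => hbound pol hnn hsum _ t)
  -- W at time 0
  have hW0 : ∀ pol, W pol 0 = V s₀ := by
    intro pol
    simp [hWdef, hd0, ite_mul]
  -- one-step unfolding of W
  have hWstep : ∀ (pol : S → A → ℝ) (t : ℕ),
      W pol (t + 1) = ∑ s, d pol t s * ∑ a, pol s a * ∑ s', p s a s' * V s' := by
    intro pol t
    calc W pol (t + 1) = ∑ s', (∑ s, ∑ a, d pol t s * pol s a * p s a s') * V s' :=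
        Finset.sum_congr rfl fun s' _ => by rw [hdrec]
      _ = ∑ s', ∑ s, ∑ a, d pol t s * pol s a * p s a s' * V s' := by
          refine Finset.sum_congr rfl fun s' _ => ?_
          rw [Finset.sum_mul]
          exact Finset.sum_congr rfl fun s _ => by rw [Finset.sum_mul]
      _ = ∑ s, ∑ a, ∑ s', d pol t s * pol s a * p s a s' * V s' := swap3 _
      _ = ∑ s, d pol t s * ∑ a, pol s a * ∑ s', p s a s' * V s' := by
          refine Finset.sum_congr rfl fun s _ => ?_
          rw [Finset.mul_sum]
          refine Finset.sum_congr rfl fun a _ => ?_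
          rw [Finset.mul_sum, Finset.mul_sum]
          exact Finset.sum_congr rfl fun s' _ => by ring
  -- Bellman identity: W πold t = Rew πold t + γ * W πold (t+1)
  have hBell : ∀ t, W πold t = Rew πold t + γ * W πold (t + 1) := by
    intro t
    rw [hWstep]
    calc W πold t
        = ∑ s, d πold t s * ((∑ a, πold s a * ∑ s', p s a s' * r s')
            + γ * ∑ a, πold s a * ∑ s', p s a s' * V s') := by
          refine Finset.sum_congr rfl fun s _ => ?_
          rw [hV s, hsplit]
      _ = Rew πold t + γ * ∑ s, d πold t s * ∑ a, πold s a * ∑ s', p s a s' * V s' := by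
          rw [hRewdef]
          simp only [mul_add, Finset.sum_add_distrib, Finset.mul_sum]
          congr 1
          exact Finset.sum_congr rfl fun s _ => Finset.sum_congr rfl fun a _ =>
            Finset.sum_congr rfl fun s' _ => by ring
  -- advantage identity: ∑ s, d π t s * ∑ a, π s a * Adv s a
  --   = Rew π t + γ * W π (t+1) - W π t
  have hAdvG : ∀ t, ∑ s, d π t s * ∑ a, π s a * Adv s a
      = Rew π t + γ * W π (t + 1) - W π t := by
    intro t
    rw [hWstep]
    have hs : ∀ s, ∑ a, π s a * Adv s a
        = (∑ a, π s a * ∑ s', p s a s' * r s')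
          + γ * (∑ a, π s a * ∑ s', p s a s' * V s') - V s := by
      intro s
      have : ∑ a, π s a * Adv s a
          = (∑ a, π s a * ∑ s', p s a s' * (r s' + γ * V s')) - (∑ a, π s a) * V s := by
        rw [Finset.sum_mul, ← Finset.sum_sub_distrib]
        refine Finset.sum_congr rfl fun a _ => ?_
        rw [hAdv]; ring
      rw [this, hπ_sum, one_mul, hsplit]
    calc ∑ s, d π t s * ∑ a, π s a * Adv s a
        = ∑ s, d π t s * ((∑ a, π s a * ∑ s', p s a s' * r s')
            + γ * (∑ a, π s a * ∑ s', p s a s' * V s') - V s) :=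
          Finset.sum_congr rfl fun s _ => by rw [hs]
      _ = Rew π t + γ * (∑ s, d π t s * ∑ a, π s a * ∑ s', p s a s' * V s') - W π t := by
          rw [hRewdef, hWdef]
          simp only [mul_add, mul_sub, Finset.sum_add_distrib, Finset.sum_sub_distrib,
            Finset.mul_sum]
          congr 2
          exact Finset.sum_congr rfl fun s _ => Finset.sum_congr rfl fun a _ =>
            Finset.sum_congr rfl fun s' _ => by ring
  -- summability facts
  have hWsumπ := hWsummable π hπ_nonneg hπ_sum
  have hWsumold := hWsummable πold hπold_nonneg hπold_sum
  have hRewsumπ := hRewsummable π hπ_nonneg hπ_sum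
  have hRewsumold := hRewsummable πold hπold_nonneg hπold_sum
  -- telescoping: ∑' (γ^t W pol t - γ^(t+1) W pol (t+1)) = V s₀
  have htel : ∀ (pol : S → A → ℝ), Summable (fun t => γ ^ t * W pol t) →
      ∑' t : ℕ, (γ ^ t * W pol t - γ ^ (t+1) * W pol (t+1)) = V s₀ := by
    intro pol hsum
    have hshift : Summable (fun t => γ ^ (t+1) * W pol (t+1)) :=
      (summable_nat_add_iff (f := fun t => γ ^ t * W pol t) 1).2 hsum
    rw [Summable.tsum_sub hsum hshift]
    have h0 : ∑' t : ℕ, γ ^ t * W pol t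
        = γ ^ 0 * W pol 0 + ∑' t : ℕ, γ ^ (t+1) * W pol (t+1) :=
      Summable.tsum_eq_zero_add hsum
    rw [h0, pow_zero, one_mul, hW0]
    ring
  -- J πold = V s₀
  have hJold : J πold = V s₀ := by
    rw [hJ πold]
    have : (fun t : ℕ => γ ^ t * ∑ s, d πold t s * ∑ a, πold s a * ∑ s', p s a s' * r s')
        = fun t => γ ^ t * W πold t - γ ^ (t+1) * W πold (t+1) := by
      funext t
      have := hBell t
      have hR : Rew πold t = W πold t - γ * W πold (t+1) := by linarith
      calc γ ^ t * ∑ s, d πold t s * ∑ a, πold s a * ∑ s', p s a s' * r s'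
          = γ ^ t * Rew πold t := rfl
        _ = γ ^ t * W πold t - γ ^ (t+1) * W πold (t+1) := by rw [hR, pow_succ]; ring
    rw [this, htel πold hWsumold]
  -- main identity for the RHS
  have hRHS : ∑' t : ℕ, γ ^ t * ∑ s, d π t s * ∑ a, π s a * Adv s a
      = J π - V s₀ := by
    have heq : (fun t : ℕ => γ ^ t * ∑ s, d π t s * ∑ a, π s a * Adv s a)
        = fun t => γ ^ t * Rew π t - (γ ^ t * W π t - γ ^ (t+1) * W π (t+1)) := by
      funext t
      rw [hAdvG t, pow_succ]
      ring
    rw [heq]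
    have htelsum : Summable (fun t => γ ^ t * W π t - γ ^ (t+1) * W π (t+1)) :=
      hWsumπ.sub ((summable_nat_add_iff (f := fun t => γ ^ t * W π t) 1).2 hWsumπ)
    rw [Summable.tsum_sub hRewsumπ htelsum, htel π hWsumπ, hJ π]
  rw [hRHS, hJold]
end

section
/- If a policy π satisfies π(s) ∈ argmax_a Q^π(s,a) for all states s, where Q^π is the Q-function of π in a finite discounted MDP, then Q^π is a fixed point of the Bellman optimality operator, i.e., Q^π = Q*, and π is an optimal policy. -/
/-!
Write `T V (s,a) = ∑ s', p(s'|s,a) (r s' + γ V s')`. Since `p(·|s,a)` is a probability vector,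
`T V - T W ≤ γ M` whenever `V - W ≤ M`. So if `Q₁ = T V₁`, `Q₂ = T V₂` and every upper bound of
`Q₁ - Q₂` also bounds `V₁ - V₂`, then at a maximiser of `Q₁ - Q₂` we get
`max (Q₁ - Q₂) ≤ γ max (Q₁ - Q₂)`, i.e. `Q₁ ≤ Q₂`. Greediness makes `Q^π = T (max_a Q^π)` a fixed
point of the optimality operator, and that fixed point is unique. For optimality, greediness gives
`Q^{π'}(s, π' s) - Q^π(s, π s) ≤ (Q^{π'} - Q^π)(s, π' s)`.
-/

open Finset

theorem nonpos_of_forall_le_mul_upperBound {ι : Type*} [Finite ι] {γ : ℝ} (hγ : γ < 1)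
    {D : ι → ℝ} (hD : ∀ M, (∀ i, D i ≤ M) → ∀ i, D i ≤ γ * M) (i : ι) : D i ≤ 0 := by
  have : Nonempty ι := ⟨i⟩
  obtain ⟨j, hj⟩ := Finite.exists_max D
  have hj_nonpos : D j ≤ 0 := by nlinarith [hD (D j) hj j]
  exact (hj i).trans hj_nonpos

theorem ciSup_sub_ciSup_le {A : Type*} [Finite A] [Nonempty A] {f g : A → ℝ} {M : ℝ}
    (h : ∀ a, f a - g a ≤ M) : (⨆ a, f a) - ⨆ a, g a ≤ M := by
  have : ⨆ a, f a ≤ (⨆ a, g a) + M :=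
    ciSup_le fun a => by linarith [h a, le_ciSup (Finite.bddAbove_range g) a]
  linarith

section Bellman

variable {S A : Type*} [Fintype S]

def bellmanBackup (p : S → A → S → ℝ) (r : S → ℝ) (γ : ℝ) (V : S → ℝ) (s : S) (a : A) : ℝ :=
  ∑ s', p s a s' * (r s' + γ * V s')

variable {p : S → A → S → ℝ} (hp_nonneg : ∀ s a s', 0 ≤ p s a s')
  (hp_sum : ∀ s a, ∑ s', p s a s' = 1) {r : S → ℝ} {γ : ℝ}
include hp_nonneg hp_sum

theorem bellmanBackup_sub_le (hγ0 : 0 ≤ γ) {V W : S → ℝ} {M : ℝ}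
    (h : ∀ s', V s' - W s' ≤ M) (s : S) (a : A) :
    bellmanBackup p r γ V s a - bellmanBackup p r γ W s a ≤ γ * M :=
  calc bellmanBackup p r γ V s a - bellmanBackup p r γ W s a
      = ∑ s', p s a s' * (γ * (V s' - W s')) := by
        rw [bellmanBackup, bellmanBackup, ← sum_sub_distrib]
        exact sum_congr rfl fun s' _ => by ring
    _ ≤ ∑ s', p s a s' * (γ * M) :=
        sum_le_sum fun s' _ =>
          mul_le_mul_of_nonneg_left (mul_le_mul_of_nonneg_left (h s') hγ0) (hp_nonneg s a s')
    _ = γ * M := by rw [← sum_mul, hp_sum, one_mul]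

variable [Finite A]

theorem le_of_eq_bellmanBackup (hγ0 : 0 ≤ γ) (hγ1 : γ < 1) {Q₁ Q₂ : S → A → ℝ} {V₁ V₂ : S → ℝ}
    (h₁ : ∀ s a, Q₁ s a = bellmanBackup p r γ V₁ s a)
    (h₂ : ∀ s a, Q₂ s a = bellmanBackup p r γ V₂ s a)
    (hV : ∀ M, (∀ s a, Q₁ s a - Q₂ s a ≤ M) → ∀ s, V₁ s - V₂ s ≤ M) (s : S) (a : A) :
    Q₁ s a ≤ Q₂ s a := by
  have hdiff := nonpos_of_forall_le_mul_upperBound hγ1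
    (D := fun q : S × A => Q₁ q.1 q.2 - Q₂ q.1 q.2) (fun M hM q => by
      rw [h₁, h₂]
      exact bellmanBackup_sub_le hp_nonneg hp_sum hγ0 (hV M fun s a => hM (s, a)) q.1 q.2) (s, a)
  exact sub_nonpos.mp hdiff

theorem eq_of_eq_bellmanBackup_iSup [Nonempty A] (hγ0 : 0 ≤ γ) (hγ1 : γ < 1)
    {Q₁ Q₂ : S → A → ℝ}
    (h₁ : ∀ s a, Q₁ s a = bellmanBackup p r γ (fun s' => ⨆ a', Q₁ s' a') s a)
    (h₂ : ∀ s a, Q₂ s a = bellmanBackup p r γ (fun s' => ⨆ a', Q₂ s' a') s a) :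
    Q₁ = Q₂ := by
  have hle {Q Q' : S → A → ℝ}
      (h : ∀ s a, Q s a = bellmanBackup p r γ (fun s' => ⨆ a', Q s' a') s a)
      (h' : ∀ s a, Q' s a = bellmanBackup p r γ (fun s' => ⨆ a', Q' s' a') s a) (s : S) (a : A) :
      Q s a ≤ Q' s a :=
    le_of_eq_bellmanBackup hp_nonneg hp_sum hγ0 hγ1 h h'
      (fun _ hM s => ciSup_sub_ciSup_le (hM s)) s a
  funext s a
  exact le_antisymm (hle h₁ h₂ s a) (hle h₂ h₁ s a)

end Bellman

theorem greedy_policy_optimal_general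
    {S A : Type*} [Fintype S] [Fintype A] [Nonempty A]
    (p : S → A → S → ℝ) (hp_nonneg : ∀ s a s', 0 ≤ p s a s')
    (hp_sum : ∀ s a, ∑ s', p s a s' = 1)
    (r : S → ℝ) (γ : ℝ) (hγ0 : 0 ≤ γ) (hγ1 : γ < 1)
    (π : S → A) (Qpi : S → A → ℝ)
    (hQpi : ∀ s a, Qpi s a = ∑ s', p s a s' * (r s' + γ * Qpi s' (π s')))
    (hgreedy : ∀ s a, Qpi s a ≤ Qpi s (π s))
    (Qstar : S → A → ℝ)
    (hQstar : ∀ s a, Qstar s a = ∑ s', p s a s' * (r s' + γ * ⨆ a', Qstar s' a')) :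
    Qpi = Qstar ∧
    ∀ (π' : S → A) (Qpi' : S → A → ℝ),
      (∀ s a, Qpi' s a = ∑ s', p s a s' * (r s' + γ * Qpi' s' (π' s'))) →
      ∀ s a, Qpi' s a ≤ Qpi s a := by
  have hiSup : ∀ s, ⨆ a, Qpi s a = Qpi s (π s) := fun s =>
    le_antisymm (ciSup_le (hgreedy s)) (le_ciSup (Finite.bddAbove_range _) _)
  have hQpi_opt : ∀ s a, Qpi s a = bellmanBackup p r γ (fun s' => ⨆ a', Qpi s' a') s a := by
    simpa only [bellmanBackup, hiSup] using hQpi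
  refine ⟨eq_of_eq_bellmanBackup_iSup hp_nonneg hp_sum hγ0 hγ1 hQpi_opt hQstar, ?_⟩
  intro π' Qpi' hQpi' s a
  refine le_of_eq_bellmanBackup hp_nonneg hp_sum hγ0 hγ1 hQpi' hQpi (fun M hM s' => ?_) s a
  linarith [hM s' (π' s'), hgreedy s' (π' s')]

/-- If a policy π is greedy with respect to its own Q-function, then Q^π is the
fixed point of the Bellman optimality operator and π is optimal. -/
theorem greedy_policy_optimal
    {S A : Type*} [Fintype S] [Fintype A] [Nonempty S] [Nonempty A]
    (p : S → A → S → ℝ) (hp_nonneg : ∀ s a s', 0 ≤ p s a s')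
    (hp_sum : ∀ s a, ∑ s', p s a s' = 1)
    (r : S → ℝ) (γ : ℝ) (hγ0 : 0 ≤ γ) (hγ1 : γ < 1)
    (π : S → A) (Qpi : S → A → ℝ)
    (hQpi : ∀ s a, Qpi s a = ∑ s', p s a s' * (r s' + γ * Qpi s' (π s')))
    (hgreedy : ∀ s a, Qpi s a ≤ Qpi s (π s))
    (Qstar : S → A → ℝ)
    (hQstar : ∀ s a, Qstar s a = ∑ s', p s a s' * (r s' + γ * ⨆ a', Qstar s' a')) :
    Qpi = Qstar ∧
    ∀ (π' : S → A) (Qpi' : S → A → ℝ),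
      (∀ s a, Qpi' s a = ∑ s', p s a s' * (r s' + γ * Qpi' s' (π' s'))) →
      ∀ s a, Qpi' s a ≤ Qpi s a :=
  greedy_policy_optimal_general p hp_nonneg hp_sum r γ hγ0 hγ1 π Qpi hQpi hgreedy Qstar hQstar
end
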